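/- Let τ be a finite monadic vocabulary, let M be a τ-model of size n, and let π₁,…,π_ℓ (with ℓ ≥ 2) be the τ-types realized in M, enumerated in ascending order of their numbers of realizing points. Then C(M) ≥ 3·|π_{ℓ-1}|_M − 3. -/

import Mathlib

/-!
Common definitions: unary (monadic) first-order structures, FO[τ] formulas in
negation normal form, formula size / quantifier rank / number of quantifiers,
semantics, description complexity, the equivalence `≡_d`, and the entropies.
-/

open Filter

/-- A `τ`-model of size `n`: each point of the domain `{1,…,n}` (modelled as `Fin n`)
is assigned its `τ`-type, i.e. the set of unary predicates of `τ` that hold at it.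
This is exactly the data of a structure `(M, P₁^M, …, P_k^M)` with `P_i^M ⊆ M`. -/
abbrev UModel (τ : Type) (n : ℕ) := Fin n → Set τ

/-- `|π|_M`: the number of points of `M` realizing the `τ`-type `π`. -/
noncomputable def typeCount {τ : Type} {n : ℕ} (M : UModel τ n) (π : Set τ) : ℕ :=
  Set.ncard {a : Fin n | M a = π}

/-- FO[τ] formulas in negation normal form: atomic formulas are `x = y`, `x ≠ y`,
`P(x)` and `¬P(x)`; the connectives are `∧`, `∨` and the quantifiers `∃`, `∀`.
Variables are indexed by natural numbers. -/
inductive FO (τ : Type) : Type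
  | eq : ℕ → ℕ → FO τ
  | ne : ℕ → ℕ → FO τ
  | pos : τ → ℕ → FO τ
  | npos : τ → ℕ → FO τ
  | and : FO τ → FO τ → FO τ
  | or : FO τ → FO τ → FO τ
  | ex : ℕ → FO τ → FO τ
  | all : ℕ → FO τ → FO τ

namespace FO

variable {τ : Type}

/-- The size of a formula: the number of atomic formulas, binary connectives
(`∧`, `∨`) and quantifiers occurring in it. -/
def size : FO τ → ℕ
  | eq _ _ => 1
  | ne _ _ => 1
  | pos _ _ => 1
  | npos _ _ => 1
  | and φ ψ => φ.size + ψ.size + 1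
  | or φ ψ => φ.size + ψ.size + 1
  | ex _ φ => φ.size + 1
  | all _ φ => φ.size + 1

/-- The quantifier rank: the maximum number of nested quantifiers. -/
def qrank : FO τ → ℕ
  | eq _ _ => 0
  | ne _ _ => 0
  | pos _ _ => 0
  | npos _ _ => 0
  | and φ ψ => max φ.qrank ψ.qrank
  | or φ ψ => max φ.qrank ψ.qrank
  | ex _ φ => φ.qrank + 1
  | all _ φ => φ.qrank + 1

/-- The number of quantifier occurrences in a formula. -/
def qcount : FO τ → ℕ
  | eq _ _ => 0
  | ne _ _ => 0
  | pos _ _ => 0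
  | npos _ _ => 0
  | and φ ψ => φ.qcount + ψ.qcount
  | or φ ψ => φ.qcount + ψ.qcount
  | ex _ φ => φ.qcount + 1
  | all _ φ => φ.qcount + 1

/-- The free variables of a formula. -/
def freeVars : FO τ → Finset ℕ
  | eq x y => {x, y}
  | ne x y => {x, y}
  | pos _ x => {x}
  | npos _ x => {x}
  | and φ ψ => φ.freeVars ∪ ψ.freeVars
  | or φ ψ => φ.freeVars ∪ ψ.freeVars
  | ex x φ => φ.freeVars \ {x}
  | all x φ => φ.freeVars \ {x}

/-- A sentence is a formula with no free variables. -/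
def IsSentence (φ : FO τ) : Prop := φ.freeVars = ∅

/-- Satisfaction of a formula in a model under a variable assignment. -/
def sat {n : ℕ} (M : UModel τ n) : (ℕ → Fin n) → FO τ → Prop
  | s, eq x y => s x = s y
  | s, ne x y => s x ≠ s y
  | s, pos P x => P ∈ M (s x)
  | s, npos P x => P ∉ M (s x)
  | s, and φ ψ => sat M s φ ∧ sat M s ψ
  | s, or φ ψ => sat M s φ ∨ sat M s ψ
  | s, ex x φ => ∃ a : Fin n, sat M (Function.update s x a) φ
  | s, all x φ => ∀ a : Fin n, sat M (Function.update s x a) φ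

end FO

/-- Truth of a formula in a model (for sentences, independent of the assignment). -/
def Sat {τ : Type} {n : ℕ} (M : UModel τ n) (φ : FO τ) : Prop :=
  ∀ s : ℕ → Fin n, FO.sat M s φ

/-- Two `τ`-models of size `n` are isomorphic iff every `τ`-type is realized by
the same number of points in both. -/
def Iso {τ : Type} {n : ℕ} (M M' : UModel τ n) : Prop :=
  ∀ π : Set τ, typeCount M π = typeCount M' π

/-- A sentence `φ` defines the model `M` (among `τ`-models of size `n`) if the
models of size `n` satisfying `φ` are exactly those isomorphic to `M`. -/
def Defines {τ : Type} {n : ℕ} (φ : FO τ) (M : UModel τ n) : Prop :=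
  ∀ M' : UModel τ n, Sat M' φ ↔ Iso M' M

/-- The description complexity `C(M)`: the size of the smallest FO[τ] sentence
defining `M` among `τ`-models of the same size. -/
noncomputable def descComp {τ : Type} {n : ℕ} (M : UModel τ n) : ℕ :=
  sInf {s : ℕ | ∃ φ : FO τ, φ.IsSentence ∧ Defines φ M ∧ φ.size = s}

/-- The constant `c_τ := 15|τ|·2^{|τ|}`. -/
def cTau (τ : Type) [Fintype τ] : ℕ := 15 * Fintype.card τ * 2 ^ Fintype.card τ

/-- `M ≡_d M'`: every `τ`-type realized fewer than `d` times in one of the models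
is realized exactly the same number of times in both; equivalently, the counts of
realizing points truncated at `d` coincide for all types. -/
def EquivD {τ : Type} {n : ℕ} (d : ℕ) (M M' : UModel τ n) : Prop :=
  ∀ π : Set τ, min (typeCount M π) d = min (typeCount M' π) d

/-- `φ` defines the `≡_d`-equivalence class of `M`: the size-`n` models satisfying
`φ` are exactly those `≡_d`-equivalent to `M`. -/
def DefinesD {τ : Type} {n : ℕ} (d : ℕ) (φ : FO τ) (M : UModel τ n) : Prop :=
  ∀ M' : UModel τ n, Sat M' φ ↔ EquivD d M' M

/-- The `d`-description complexity `C_d(M)`: the size of the smallest FO_d[τ]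
sentence (quantifier rank at most `d`) true exactly in the size-`n` models
`≡_d`-equivalent to `M`. -/
noncomputable def descCompD {τ : Type} {n : ℕ} (d : ℕ) (M : UModel τ n) : ℕ :=
  sInf {s : ℕ | ∃ φ : FO τ, φ.IsSentence ∧ φ.qrank ≤ d ∧ DefinesD d φ M ∧ φ.size = s}

/-- The Shannon entropy `H_S(M) = Σ_π −(|π|_M/n)·log₂(|π|_M/n)` (terms with
`|π|_M = 0` vanish, as `Real.logb 2 0 = 0`). -/
noncomputable def HS {τ : Type} [Fintype τ] {n : ℕ} (M : UModel τ n) : ℝ :=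
  ∑ π : Set τ, -((typeCount M π : ℝ) / n) * Real.logb 2 ((typeCount M π : ℝ) / n)

/-- The Boltzmann entropy `H_B(M)`: `log₂` of the number of `τ`-models with the
same domain that are isomorphic to `M`. -/
noncomputable def HB {τ : Type} {n : ℕ} (M : UModel τ n) : ℝ :=
  Real.logb 2 (Nat.card {M' : UModel τ n // Iso M' M})

/-- The Boltzmann entropy with respect to `≡_d`: `log₂` of the number of
`τ`-models with the same domain that are `≡_d`-equivalent to `M`. -/
noncomputable def HBd {τ : Type} {n : ℕ} (d : ℕ) (M : UModel τ n) : ℝ :=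
  Real.logb 2 (Nat.card {M' : UModel τ n // EquivD d M' M})


/-!
Let `A` and `B` be the two most frequent types of `M`, realized `a ≤ b` times, and move one
point of `M` from `B` to `A`. The resulting model `M'` is not isomorphic to `M`, yet every type
whose set of realizing points changed is realized at least `a - 1` times in both models. By an
Ehrenfeucht–Fraïssé argument, a sentence can only tell `M'` from `M` if some connected
component of the graph that its equality atoms draw on its variables has at least `a`
vertices. Such a component takes `a - 1` equality atoms and, in a sentence, `a` quantifiers;
since `size + 1 = #quantifiers + 2 · #atoms`, every sentence defining `M` has size at least
`3a - 3`. Finally, `M` is defined by the sentence naming `n` distinct points with their types,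
so the infimum defining `C(M)` ranges over a nonempty set.
-/
open Function Relation

section EdgeLists

variable {α : Type*}

def pairAdj (l : List (α × α)) (a b : α) : Prop := (a, b) ∈ l ∨ (b, a) ∈ l

instance (l : List (α × α)) : Std.Symm (pairAdj l) := ⟨fun _ _ => Or.symm⟩

def reachSet (l : List (α × α)) (X : Set α) : Set α :=
  {y | ∃ x ∈ X, ReflTransGen (pairAdj l) x y}

variable {l : List (α × α)} {X Y S : Set α}

lemma subset_reachSet : X ⊆ reachSet l X := fun x hx => ⟨x, hx, .refl⟩

lemma reachSet_mono (h : X ⊆ Y) : reachSet l X ⊆ reachSet l Y :=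
  fun _ ⟨x, hx, hxy⟩ => ⟨x, h hx, hxy⟩

lemma reachSet_subset (hX : X ⊆ S) (hS : ∀ a ∈ S, ∀ b, pairAdj l a b → b ∈ S) :
    reachSet l X ⊆ S := by
  rintro y ⟨x, hx, hxy⟩
  induction hxy with
  | refl => exact hX hx
  | tail _ hbc ih => exact hS _ ih _ hbc

/-- An extra edge leaves a reachable set unchanged when it joins two of its points or
two points outside it. -/
lemma reachSet_cons_subset {e : α × α} (hXY : X ⊆ Y)
    (he : e.1 ∈ reachSet l Y ↔ e.2 ∈ reachSet l Y) : reachSet (e :: l) X ⊆ reachSet l Y := by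
  refine reachSet_subset (hXY.trans subset_reachSet) fun a ha b hab => ?_
  rcases hab with h | h <;> rcases List.mem_cons.1 h with rfl | h
  · exact he.1 ha
  · obtain ⟨x, hx, hxa⟩ := ha
    exact ⟨x, hx, hxa.tail (Or.inl h)⟩
  · exact he.2 ha
  · obtain ⟨x, hx, hxa⟩ := ha
    exact ⟨x, hx, hxa.tail (Or.inr h)⟩

theorem encard_reachSet_le (l : List (α × α)) (X : Set α) :
    (reachSet l X).encard ≤ l.length + X.encard := by
  induction l generalizing X with
  | nil =>
    refine (Set.encard_mono (reachSet_subset subset_rfl ?_)).trans le_add_self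
    simp [pairAdj]
  | cons e l ih =>
    have join : ∀ c, (e.1 ∈ reachSet l (insert c X) ↔ e.2 ∈ reachSet l (insert c X)) →
        (reachSet (e :: l) X).encard ≤ (e :: l).length + X.encard := fun c hc =>
      calc (reachSet (e :: l) X).encard
          ≤ (reachSet l (insert c X)).encard :=
            Set.encard_mono (reachSet_cons_subset (Set.subset_insert _ _) hc)
        _ ≤ l.length + (X.encard + 1) :=
            (ih _).trans (add_le_add_right (Set.encard_insert_le _ _) _)
        _ = (e :: l).length + X.encard := by rw [List.length_cons]; push_cast; ring
    by_cases h₁ : e.1 ∈ reachSet l X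
    · exact join e.2 (iff_of_true (reachSet_mono (Set.subset_insert _ _) h₁)
        (subset_reachSet (Set.mem_insert _ _)))
    by_cases h₂ : e.2 ∈ reachSet l X
    · exact join e.1 (iff_of_true (subset_reachSet (Set.mem_insert _ _))
        (reachSet_mono (Set.subset_insert _ _) h₂))
    calc (reachSet (e :: l) X).encard
        ≤ (reachSet l X).encard :=
          Set.encard_mono (reachSet_cons_subset subset_rfl (iff_of_false h₁ h₂))
      _ ≤ (e :: l).length + X.encard := (ih X).trans (by gcongr; simp)

lemma exists_pairAdj_of_reflTransGen {x y : α} (h : ReflTransGen (pairAdj l) x y)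
    (hxy : x ≠ y) :
    (∃ c, pairAdj l x c) ∧ ∃ c, pairAdj l y c := by
  obtain rfl | ⟨c, hxc, -⟩ := h.cases_head
  · exact absurd rfl hxy
  obtain rfl | ⟨d, -, hdy⟩ := h.cases_tail
  · exact absurd rfl hxy
  exact ⟨⟨c, hxc⟩, d, symm hdy⟩

end EdgeLists

namespace FO

variable {τ : Type}

def natoms : FO τ → ℕ
  | eq _ _ | ne _ _ | pos _ _ | npos _ _ => 1
  | and φ ψ | or φ ψ => φ.natoms + ψ.natoms
  | ex _ φ | all _ φ => φ.natoms

def eqPairs : FO τ → List (ℕ × ℕ)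
  | eq x y | ne x y => [(x, y)]
  | pos _ _ | npos _ _ => []
  | and φ ψ | or φ ψ => φ.eqPairs ++ ψ.eqPairs
  | ex _ φ | all _ φ => φ.eqPairs

def boundVars : FO τ → Finset ℕ
  | eq _ _ | ne _ _ | pos _ _ | npos _ _ => ∅
  | and φ ψ | or φ ψ => φ.boundVars ∪ ψ.boundVars
  | ex x φ | all x φ => insert x φ.boundVars

def Linked (φ : FO τ) : ℕ → ℕ → Prop := ReflTransGen (pairAdj φ.eqPairs)

lemma size_add_one (φ : FO τ) : φ.size + 1 = φ.qcount + 2 * φ.natoms := by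
  induction φ <;> simp only [size, qcount, natoms] <;> omega

lemma length_eqPairs_le_natoms (φ : FO τ) : φ.eqPairs.length ≤ φ.natoms := by
  induction φ <;> simp only [eqPairs, natoms, List.length_append, List.length_cons,
    List.length_nil] <;> omega

lemma card_boundVars_le_qcount (φ : FO τ) : φ.boundVars.card ≤ φ.qcount := by
  induction φ with
  | eq | ne | pos | npos => simp [boundVars]
  | and φ ψ ih₁ ih₂ | or φ ψ ih₁ ih₂ =>
    exact (Finset.card_union_le _ _).trans (by simp [qcount]; omega)
  | ex x φ ih | all x φ ih => exact (Finset.card_insert_le _ _).trans (by simp [qcount]; omega)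

lemma mem_freeVars_or_boundVars_of_mem_eqPairs {φ : FO τ} {p : ℕ × ℕ} (hp : p ∈ φ.eqPairs) :
    p.1 ∈ φ.freeVars ∪ φ.boundVars ∧ p.2 ∈ φ.freeVars ∪ φ.boundVars := by
  induction φ with
  | eq x y | ne x y => simp_all [eqPairs, freeVars]
  | pos | npos => simp [eqPairs] at hp
  | and φ ψ ih₁ ih₂ | or φ ψ ih₁ ih₂ =>
    rcases (List.mem_append.1 hp).imp ih₁ ih₂ with h | h <;>
      simp only [freeVars, boundVars, Finset.mem_union] at h ⊢ <;> tauto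
  | ex x φ ih | all x φ ih =>
    have := ih hp
    simp only [freeVars, boundVars, Finset.mem_union, Finset.mem_sdiff, Finset.mem_insert,
      Finset.mem_singleton] at this ⊢
    tauto

lemma mem_freeVars_or_boundVars_of_pairAdj {φ : FO τ} {x y : ℕ} (h : pairAdj φ.eqPairs x y) :
    x ∈ φ.freeVars ∪ φ.boundVars := by
  rcases h with h | h
  · exact (mem_freeVars_or_boundVars_of_mem_eqPairs h).1
  · exact (mem_freeVars_or_boundVars_of_mem_eqPairs h).2

lemma linked_equivalence (φ : FO τ) : Equivalence φ.Linked :=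
  ⟨fun _ => .refl, fun h => symm (r := ReflTransGen (pairAdj φ.eqPairs)) h, .trans⟩

lemma Linked.mono {φ ψ : FO τ} (h : φ.eqPairs ⊆ ψ.eqPairs) {x y : ℕ} (hxy : φ.Linked x y) :
    ψ.Linked x y :=
  ReflTransGen.mono (fun _ _ => Or.imp (@h _) (@h _)) _ _ hxy

lemma encard_setOf_linked_le (φ : FO τ) (x : ℕ) :
    {y | φ.Linked x y}.encard ≤ φ.eqPairs.length + 1 := by
  simpa [reachSet, Linked] using encard_reachSet_le φ.eqPairs {x}

lemma setOf_linked_subset {φ : FO τ} {x : ℕ} (h : 1 < {y | φ.Linked x y}.encard) :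
    {y | φ.Linked x y} ⊆ ↑(φ.freeVars ∪ φ.boundVars) := by
  obtain ⟨a, b, ha, hb, hab⟩ := Set.one_lt_encard_iff.1 h
  obtain ⟨c, hc, hxc⟩ : ∃ c, φ.Linked x c ∧ x ≠ c := by
    by_cases hxa : x = a
    · exact ⟨b, hb, fun hxb => hab (hxa.symm.trans hxb)⟩
    · exact ⟨a, ha, hxa⟩
  obtain ⟨⟨d, hxd⟩, -⟩ := exists_pairAdj_of_reflTransGen hc hxc
  intro y hy
  by_cases hxy : x = y
  · exact hxy ▸ mem_freeVars_or_boundVars_of_pairAdj hxd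
  · obtain ⟨-, e, hye⟩ := exists_pairAdj_of_reflTransGen hy hxy
    exact mem_freeVars_or_boundVars_of_pairAdj hye

/-- Linking `K + 1` variables of a sentence takes `K` equality atoms and `K + 1` quantifiers;
as `size + 1 = qcount + 2 * natoms`, this costs size `3K`. -/
theorem three_mul_le_size {φ : FO τ} (hφ : φ.IsSentence) {K x : ℕ}
    (hK : K < {y | φ.Linked x y}.encard) : 3 * K ≤ φ.size := by
  rcases Nat.eq_zero_or_pos K with rfl | hK₀
  · simp
  have hatoms : K ≤ φ.natoms := by
    have := hK.trans_le (encard_setOf_linked_le φ x)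
    have := φ.length_eqPairs_le_natoms
    norm_cast at *
    omega
  have hquant : K + 1 ≤ φ.qcount := by
    have h1 : 1 < {y | φ.Linked x y}.encard := lt_of_le_of_lt (by exact_mod_cast hK₀) hK
    have := (Set.encard_mono (setOf_linked_subset h1)).trans_lt' hK
    rw [hφ, Finset.empty_union, Set.encard_coe_eq_coe_finsetCard] at this
    have := φ.card_boundVars_le_qcount
    norm_cast at *
    omega
  have := φ.size_add_one
  omega

end FO

section Transfer

variable {τ : Type} {n K : ℕ} {M M' : UModel τ n}

def AgreeOnSmallTypes (K : ℕ) (M M' : UModel τ n) : Prop :=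
  ∀ σ : Set τ, {a | M a = σ} ≠ {a | M' a = σ} → K ≤ typeCount M σ ∧ K ≤ typeCount M' σ

lemma AgreeOnSmallTypes.symm (h : AgreeOnSmallTypes K M M') :
    AgreeOnSmallTypes K M' M :=
  fun σ hσ => (h σ (Ne.symm hσ)).symm

def PartialIsoOn {ι : Type*} (M M' : UModel τ n) (V : Set ι) (R : ι → ι → Prop)
    (s s' : ι → Fin n) : Prop :=
  (∀ x ∈ V, M (s x) = M' (s' x)) ∧ ∀ x ∈ V, ∀ y ∈ V, R x y → (s x = s y ↔ s' x = s' y)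

namespace PartialIsoOn

variable {ι : Type*} {V W : Set ι} {R Q : ι → ι → Prop} {s s' : ι → Fin n}

lemma symm (h : PartialIsoOn M M' V R s s') : PartialIsoOn M' M V R s' s :=
  ⟨fun x hx => (h.1 x hx).symm, fun x hx y hy hxy => (h.2 x hx y hy hxy).symm⟩

lemma mono (h : PartialIsoOn M M' V R s s') (hWV : W ⊆ V)
    (hQR : ∀ x ∈ W, ∀ y ∈ W, Q x y → R x y) : PartialIsoOn M M' W Q s s' :=
  ⟨fun x hx => h.1 x (hWV hx), fun x hx y hy hxy => h.2 x (hWV hx) y (hWV hy) (hQR x hx y hy hxy)⟩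

end PartialIsoOn

lemma encard_image_le_of_eq_imp_eq {ι α β : Type*} {S : Set ι} {f : ι → α} {g : ι → β}
    (h : ∀ x ∈ S, ∀ y ∈ S, f x = f y → g x = g y) : (g '' S).encard ≤ (f '' S).encard := by
  rcases S.eq_empty_or_nonempty with rfl | ⟨x₀, -⟩
  · simp
  have : Nonempty ι := ⟨x₀⟩
  refine le_trans (Set.encard_mono ?_) (Set.encard_image_le (g ∘ invFunOn f S) _)
  rintro _ ⟨x, hx, rfl⟩
  have hfx : ∃ a ∈ S, f a = f x := ⟨x, hx, rfl⟩
  exact ⟨f x, ⟨x, hx, rfl⟩, (h _ (invFunOn_mem hfx) _ hx (invFunOn_eq hfx)).symm ▸ rfl⟩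

theorem AgreeOnSmallTypes.exists_extension {ι : Type*} (hMM' : AgreeOnSmallTypes K M M')
    {C : Set ι} (hC : C.encard < K) {s s' : ι → Fin n}
    (h : PartialIsoOn M M' C (fun _ _ => True) s s') (w : Fin n) :
    ∃ u, M' u = M w ∧ ∀ z ∈ C, (s z = w ↔ s' z = u) := by
  by_cases hw : ∃ y ∈ C, s y = w
  · obtain ⟨y, hy, rfl⟩ := hw
    exact ⟨s' y, (h.1 y hy).symm, fun z hz => h.2 z hz y hy trivial⟩
  push Not at hw
  set σ := M w
  set D := {z ∈ C | M (s z) = σ}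
  suffices hlt : (s' '' D).encard < {a | M' a = σ}.encard by
    obtain ⟨u, hu, huD⟩ := Set.not_subset.1 fun hsub => (Set.encard_mono hsub).not_gt hlt
    refine ⟨u, hu, fun z hz => iff_of_false (hw z hz) fun hzu => huD ⟨z, ⟨hz, ?_⟩, hzu⟩⟩
    rw [h.1 z hz, hzu]
    exact hu
  by_cases hσ : {a | M a = σ} = {a | M' a = σ}
  · -- the points of type `σ` in `M` that are named by `C` miss `w`
    calc (s' '' D).encard ≤ (s '' D).encard :=
          encard_image_le_of_eq_imp_eq fun x hx y hy => (h.2 x hx.1 y hy.1 trivial).1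
      _ ≤ ({a | M a = σ} \ {w}).encard := Set.encard_mono <| by
          rintro _ ⟨z, hz, rfl⟩
          exact ⟨hz.2, hw z hz.1⟩
      _ < {a | M a = σ}.encard :=
          (Set.toFinite _).encard_lt_encard (Set.sdiff_singleton_ssubset.2 rfl)
      _ = {a | M' a = σ}.encard := by rw [hσ]
  · calc (s' '' D).encard ≤ C.encard :=
          (Set.encard_image_le _ _).trans (Set.encard_mono fun z hz => hz.1)
      _ < K := hC
      _ ≤ {a | M' a = σ}.encard := by
          rw [← (Set.toFinite _).cast_ncard_eq]
          exact_mod_cast (hMM' σ hσ).2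

theorem PartialIsoOn.exists_update {ι : Type*} [DecidableEq ι] (hMM' : AgreeOnSmallTypes K M M')
    {V : Set ι} {R : ι → ι → Prop} (hR : Equivalence R)
    {x : ι} (hK : {y | R x y}.encard ≤ K) {s s' : ι → Fin n}
    (h : PartialIsoOn M M' V R s s') (w : Fin n) :
    ∃ u, PartialIsoOn M M' (insert x V) R (update s x w) (update s' x u) := by
  set C := {z ∈ V | R x z ∧ z ≠ x}
  have hC : C.encard < K := by
    have hsub : C ⊆ {y | R x y} \ {x} := fun z hz => ⟨hz.2.1, hz.2.2⟩
    refine (Set.encard_mono hsub).trans_lt (ENat.add_one_le_natCast_iff.1 ?_)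
    rwa [Set.encard_sdiff_singleton_add_one (show x ∈ {y | R x y} from hR.refl x)]
  obtain ⟨u, hu, huC⟩ := hMM'.exists_extension hC (h.mono (fun z hz => hz.1)
    fun y hy z hz _ => hR.trans (hR.symm hy.2.1) hz.2.1) w
  refine ⟨u, fun z hz => ?_, fun y hy z hz hyz => ?_⟩
  · rcases eq_or_ne z x with rfl | hzx
    · simpa using hu.symm
    · simpa [hzx] using h.1 z (hz.resolve_left hzx)
  rcases eq_or_ne y x with rfl | hyx <;> rcases eq_or_ne z y with rfl | hzy
  · simp
  · simpa [hzy, eq_comm] using huC z ⟨hz.resolve_left hzy, hyz, hzy⟩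
  · simp
  · rcases eq_or_ne z x with rfl | hzx
    · simpa [hyx] using huC y ⟨hy.resolve_left hyx, hR.symm hyz, hyx⟩
    · simpa [hyx, hzx] using h.2 y (hy.resolve_left hyx) z (hz.resolve_left hzx) hyz

lemma PartialIsoOn.forth_and_back (hMM' : AgreeOnSmallTypes K M M') {φ : FO τ} {x : ℕ}
    (hK : {y | φ.Linked x y}.encard ≤ K) {s s' : ℕ → Fin n}
    (h : PartialIsoOn M M' ↑(φ.freeVars \ {x}) φ.Linked s s')
    (ih : ∀ {t t' : ℕ → Fin n}, PartialIsoOn M M' ↑φ.freeVars φ.Linked t t' →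
      (FO.sat M t φ ↔ FO.sat M' t' φ)) :
    (∀ w, ∃ u, (FO.sat M (update s x w) φ ↔ FO.sat M' (update s' x u) φ)) ∧
      ∀ u, ∃ w, (FO.sat M (update s x w) φ ↔ FO.sat M' (update s' x u) φ) := by
  have hfv : (φ.freeVars : Set ℕ) ⊆ insert x ↑(φ.freeVars \ {x}) := by
    intro y; by_cases y = x <;> simp_all
  refine ⟨fun w => ?_, fun u => ?_⟩
  · obtain ⟨u, hu⟩ := h.exists_update hMM' φ.linked_equivalence hK w
    exact ⟨u, ih (hu.mono hfv fun _ _ _ _ => id)⟩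
  · obtain ⟨w, hw⟩ := h.symm.exists_update hMM'.symm φ.linked_equivalence hK u
    exact ⟨w, ih (hw.symm.mono hfv fun _ _ _ _ => id)⟩

/-- An Ehrenfeucht–Fraïssé argument: the invariant only relates variables linked by equality
atoms, and a component of at most `K` variables never uses up a type realized by `K` points. -/
theorem sat_iff_sat_of_partialIsoOn (hMM' : AgreeOnSmallTypes K M M') {φ : FO τ}
    (hK : ∀ x, {y | φ.Linked x y}.encard ≤ K) {s s' : ℕ → Fin n}
    (h : PartialIsoOn M M' ↑φ.freeVars φ.Linked s s') :
    FO.sat M s φ ↔ FO.sat M' s' φ := by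
  induction φ generalizing s s' with
  | eq x y | ne x y =>
    have := h.2 x (by simp [FO.freeVars]) y (by simp [FO.freeVars])
      (.single (Or.inl (List.mem_singleton_self _)))
    simp only [FO.sat, ne_eq, this]
  | pos P x | npos P x =>
    simp [FO.sat, h.1 x (by simp [FO.freeVars])]
  | and φ ψ ih₁ ih₂ | or φ ψ ih₁ ih₂ =>
    have hφ : φ.eqPairs ⊆ φ.eqPairs ++ ψ.eqPairs := List.subset_append_left _ _
    have hψ : ψ.eqPairs ⊆ φ.eqPairs ++ ψ.eqPairs := List.subset_append_right _ _
    rw [FO.sat, FO.sat,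
      ih₁ (fun x => (Set.encard_mono fun _ => FO.Linked.mono hφ).trans (hK x))
        (h.mono (by simp [FO.freeVars]) fun _ _ _ _ => FO.Linked.mono hφ),
      ih₂ (fun x => (Set.encard_mono fun _ => FO.Linked.mono hψ).trans (hK x))
        (h.mono (by simp [FO.freeVars]) fun _ _ _ _ => FO.Linked.mono hψ)]
  | ex x φ ih =>
    obtain ⟨forth, back⟩ := h.forth_and_back (φ := φ) hMM' (hK x) (ih hK)
    exact ⟨fun ⟨w, hw⟩ => (forth w).imp fun u hu => hu.1 hw,
      fun ⟨u, hu⟩ => (back u).imp fun w hw => hw.2 hu⟩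
  | all x φ ih =>
    obtain ⟨forth, back⟩ := h.forth_and_back (φ := φ) hMM' (hK x) (ih hK)
    exact ⟨fun H u => (back u).elim fun w hw => hw.1 (H w),
      fun H w => (forth w).elim fun u hu => hu.2 (H u)⟩

theorem exists_lt_encard_setOf_linked (hMM' : AgreeOnSmallTypes K M M') (hM' : ¬Iso M' M)
    {φ : FO τ} (hφ : φ.IsSentence) (hdef : Defines φ M) :
    ∃ x, K < {y | φ.Linked x y}.encard := by
  by_contra! hK
  refine hM' ((hdef M').1 fun s => ?_)
  have hiso : PartialIsoOn M M' ↑φ.freeVars φ.Linked s s := by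
    simp [show φ.freeVars = ∅ from hφ, PartialIsoOn]
  exact (sat_iff_sat_of_partialIsoOn hMM' hK hiso).1 ((hdef M).2 (fun _ => rfl) s)

end Transfer

namespace FO

variable {τ : Type} {n : ℕ}

/-- The empty conjunction is the sentence `∀ x₀, x₀ = x₀`, so `conj` adds no free variable. -/
def conj (l : List (FO τ)) : FO τ := l.foldr and (all 0 (eq 0 0))

lemma sat_conj {M : UModel τ n} {s : ℕ → Fin n} (l : List (FO τ)) :
    sat M s (conj l) ↔ ∀ ψ ∈ l, sat M s ψ := by
  induction l with
  | nil => simp [conj, sat]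
  | cons ψ l ih => simp [conj, sat, ← ih]

lemma mem_freeVars_conj {l : List (FO τ)} {y : ℕ} (hy : y ∈ (conj l).freeVars) :
    ∃ ψ ∈ l, y ∈ ψ.freeVars := by
  induction l with
  | nil => simp [conj, freeVars] at hy
  | cons ψ l ih =>
    simp only [conj, List.foldr_cons, freeVars, Finset.mem_union] at hy
    rcases hy with hy | hy
    · exact ⟨ψ, List.mem_cons_self, hy⟩
    · obtain ⟨χ, hχ, hy⟩ := ih hy
      exact ⟨χ, List.mem_cons_of_mem _ hχ, hy⟩

/-- `exBlock k φ` is `∃ x₀ … ∃ x_{k-1}, φ`. -/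
def exBlock : ℕ → FO τ → FO τ
  | 0, φ => φ
  | k + 1, φ => exBlock k (ex k φ)

lemma sat_exBlock {M : UModel τ n} (k : ℕ) (φ : FO τ) (s : ℕ → Fin n) :
    sat M s (exBlock k φ) ↔ ∃ t : ℕ → Fin n, sat M (fun m => if m < k then t m else s m) φ := by
  induction k generalizing φ with
  | zero =>
    exact ⟨fun h => ⟨s, by simpa [exBlock] using h⟩, fun ⟨t, h⟩ => by simpa [exBlock] using h⟩
  | succ k ih =>
    have hupdate : ∀ (t : ℕ → Fin n) a, update (fun m => if m < k then t m else s m) k a =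
        fun m => if m < k + 1 then update t k a m else s m := by
      intro t a; ext m
      rcases lt_trichotomy m k with h | rfl | h
      · simp [h, h.ne, Nat.lt_succ_of_lt h]
      · simp
      · simp [h.ne', h.not_gt, show ¬m < k + 1 by omega]
    simp only [exBlock, ih, sat, hupdate]
    exact ⟨fun ⟨t, a, h⟩ => ⟨_, h⟩, fun ⟨t, h⟩ => ⟨t, t k, by rwa [update_eq_self]⟩⟩

lemma mem_freeVars_exBlock {k : ℕ} {φ : FO τ} {y : ℕ} (hy : y ∈ (exBlock k φ).freeVars) :
    y ∈ φ.freeVars ∧ k ≤ y := by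
  induction k generalizing φ with
  | zero => exact ⟨hy, Nat.zero_le _⟩
  | succ k ih =>
    obtain ⟨hy, hky⟩ := ih hy
    simp only [freeVars, Finset.mem_sdiff, Finset.mem_singleton] at hy
    exact ⟨hy.1, by omega⟩

open Classical in
noncomputable def realizes [Fintype τ] (σ : Set τ) (x : ℕ) : FO τ :=
  conj ((Finset.univ : Finset τ).toList.map fun P => if P ∈ σ then pos P x else npos P x)

lemma sat_realizes [Fintype τ] {M : UModel τ n} {s : ℕ → Fin n} (σ : Set τ) (x : ℕ) :
    sat M s (realizes σ x) ↔ M (s x) = σ := by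
  classical
  simp only [realizes, sat_conj, List.forall_mem_map, Finset.mem_toList, Finset.mem_univ,
    true_implies, Set.ext_iff]
  refine forall_congr' fun P => ?_
  split_ifs with hP <;> simp [sat, hP]

lemma freeVars_realizes [Fintype τ] {σ : Set τ} {x y : ℕ} (hy : y ∈ (realizes σ x).freeVars) :
    y = x := by
  classical
  obtain ⟨ψ, hψ, hy⟩ := mem_freeVars_conj hy
  simp only [List.mem_map] at hψ
  obtain ⟨P, -, rfl⟩ := hψ
  split_ifs at hy <;> simpa [freeVars] using hy

/-- The sentence `∃ x₀ … x_{n-1}, ⋀_{i ≠ j} xᵢ ≠ xⱼ ∧ ⋀ᵢ realizes (M i) xᵢ`. -/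
noncomputable def definingSentence [Fintype τ] (M : UModel τ n) : FO τ :=
  exBlock n <| conj <|
    ((Finset.univ : Finset (Fin n)).offDiag.toList.map fun p => ne p.1 p.2) ++
      (List.finRange n).map fun i => realizes (M i) i

lemma definingSentence_isSentence [Fintype τ] (M : UModel τ n) :
    (definingSentence M).IsSentence := by
  refine Finset.eq_empty_of_forall_notMem fun y hy => ?_
  obtain ⟨hy, hny⟩ := mem_freeVars_exBlock hy
  obtain ⟨ψ, hψ, hy⟩ := mem_freeVars_conj hy
  simp only [List.mem_append, List.mem_map] at hψ
  rcases hψ with ⟨p, -, rfl⟩ | ⟨i, -, rfl⟩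
  · simp only [freeVars, Finset.mem_insert, Finset.mem_singleton] at hy
    rcases hy with rfl | rfl <;> omega
  · have := freeVars_realizes hy
    omega

lemma sat_definingSentence [Fintype τ] (M M'' : UModel τ n) (s : ℕ → Fin n) :
    sat M'' s (definingSentence M) ↔
      ∃ g : Fin n → Fin n, Injective g ∧ ∀ i, M'' (g i) = M i := by
  simp only [definingSentence, sat_exBlock, sat_conj, List.forall_mem_append, List.forall_mem_map,
    Finset.mem_toList, Finset.mem_offDiag, Finset.mem_univ, true_and, Prod.forall, sat,
    sat_realizes, Fin.is_lt, if_true, List.mem_finRange, true_implies]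
  constructor
  · rintro ⟨t, hinj, ht⟩
    exact ⟨fun i => t i, fun i j h => by_contra (hinj i j · h), ht⟩
  · rintro ⟨g, hinj, hg⟩
    exact ⟨fun m => if h : m < n then g ⟨m, h⟩ else s m,
      fun i j hij => by simp [hinj.ne hij], fun i => by simp [hg]⟩

end FO

section Definability

variable {τ : Type} {n : ℕ}

lemma iso_iff_exists_injective {M M'' : UModel τ n} :
    Iso M'' M ↔ ∃ g : Fin n → Fin n, Injective g ∧ ∀ i, M'' (g i) = M i := by
  constructor
  · intro h
    have e : ∀ σ, {a // M a = σ} ≃ {a // M'' a = σ} := fun σ =>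
      (Finite.card_eq.1 (h σ).symm).some
    exact ⟨Equiv.ofFiberEquiv e, (Equiv.ofFiberEquiv e).injective, Equiv.ofFiberEquiv_map e⟩
  · rintro ⟨g, hg, hgM⟩ σ
    have hpre : {a | M a = σ} = g ⁻¹' {a | M'' a = σ} := by ext; simp [hgM]
    rw [typeCount, typeCount, hpre, Set.ncard_preimage_of_injective_subset_range hg
      (by simp [(Finite.injective_iff_surjective.1 hg).range_eq])]

theorem definingSentence_defines [Fintype τ] (M : UModel τ n) :
    Defines (FO.definingSentence M) M := by
  intro M''
  simp only [Sat, FO.sat_definingSentence, ← iso_iff_exists_injective]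
  rcases isEmpty_or_nonempty (Fin n) with hn | ⟨⟨a⟩⟩
  · exact iff_of_true (fun s => isEmptyElim (s 0)) fun σ =>
      congrArg Set.ncard (Subsingleton.elim _ _)
  · exact ⟨fun h => h fun _ => a, fun h _ => h⟩

theorem three_mul_le_descComp [Fintype τ] {K : ℕ} {M M' : UModel τ n}
    (hMM' : AgreeOnSmallTypes K M M') (hM' : ¬Iso M' M) : 3 * K ≤ descComp M := by
  refine le_csInf ⟨_, FO.definingSentence M, FO.definingSentence_isSentence M,
    definingSentence_defines M, rfl⟩ ?_
  rintro _ ⟨φ, hφ, hdef, rfl⟩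
  obtain ⟨x, hx⟩ := exists_lt_encard_setOf_linked hMM' hM' hφ hdef
  exact FO.three_mul_le_size hφ hx

end Definability

section Update

variable {τ : Type} {n : ℕ} {M : UModel τ n} {p : Fin n} {A σ : Set τ}

lemma setOf_update_eq_of_ne (h : A ≠ σ) : {z | update M p A z = σ} = {z | M z = σ} \ {p} := by
  ext z
  by_cases hz : z = p <;> simp [hz, h]

lemma setOf_update_self : {z | update M p A z = A} = insert p {z | M z = A} := by
  ext z
  by_cases hz : z = p <;> simp [hz]

lemma typeCount_update_self (h : M p ≠ A) : typeCount (update M p A) A = typeCount M A + 1 := by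
  rw [typeCount, setOf_update_self,
    Set.ncard_insert_of_notMem (show p ∉ {z | M z = A} from h), typeCount]

lemma typeCount_update_apply (h : M p ≠ A) :
    typeCount (update M p A) (M p) = typeCount M (M p) - 1 := by
  rw [typeCount, setOf_update_eq_of_ne h.symm,
    Set.ncard_sdiff_singleton_of_mem (show p ∈ {z | M z = M p} from rfl), typeCount]

lemma not_iso_update (h : M p ≠ A) : ¬Iso (update M p A) M := fun hiso => by
  have := hiso A
  rw [typeCount_update_self h] at this
  omega

lemma agreeOnSmallTypes_update {K : ℕ} (h : M p ≠ A) (hA : K ≤ typeCount M A)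
    (hp : K < typeCount M (M p)) : AgreeOnSmallTypes K M (update M p A) := by
  intro σ hσ
  by_cases hσA : σ = A
  · subst hσA
    rw [typeCount_update_self h]
    omega
  by_cases hσp : σ = M p
  · subst hσp
    rw [typeCount_update_apply h]
    omega
  refine absurd ?_ hσ
  rw [setOf_update_eq_of_ne (Ne.symm hσA), Set.sdiff_singleton_eq_self fun hp => hσp hp.symm]

end Update

/-- If `π 0, …, π (ℓ-1)` (with `ℓ ≥ 2`) enumerate the `τ`-types realized
in the size-`n` model `M` in ascending order of numbers of realizing points, then
`C(M) ≥ 3·|π_{ℓ-1}|_M − 3`, the second largest type being `π ⟨ℓ-2⟩` here. -/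
theorem descComp_lower_bound (τ : Type) [Fintype τ] {n ℓ : ℕ} (hℓ : 2 ≤ ℓ)
    (M : UModel τ n) (π : Fin ℓ → Set τ)
    (hinj : Function.Injective π)
    (hasc : Monotone fun i => typeCount M (π i)) :
    3 * typeCount M (π ⟨ℓ - 2, by omega⟩) - 3 ≤ descComp M := by
  set A := π ⟨ℓ - 2, by omega⟩
  set B := π ⟨ℓ - 1, by omega⟩
  have hAB : A ≠ B := hinj.ne (by simp only [ne_eq, Fin.mk.injEq]; omega)
  have hcount : typeCount M A ≤ typeCount M B := hasc (Fin.mk_le_mk.2 (by omega))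
  rcases Nat.eq_zero_or_pos (typeCount M A) with hA | hA
  · omega
  obtain ⟨p, hp⟩ : ∃ p, M p = B :=
    Set.nonempty_of_ncard_ne_zero (s := {z | M z = B}) (show typeCount M B ≠ 0 by omega)
  have hpA : M p ≠ A := hp ▸ hAB.symm
  have := three_mul_le_descComp (K := typeCount M A - 1)
    (agreeOnSmallTypes_update hpA (by omega) (by rw [hp]; omega)) (not_iso_update hpA)
  omega
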